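/- Let σ be a ℂ-algebra automorphism of ℂ[[t]] of finite order m, and suppose σ(t) = ζ t + (higher order terms) where ζ is a primitive m-th root of unity. Then there exists a formal parameter t̃ ∈ ℂ[[t]] (i.e., t̃ = c t + higher order terms with c ≠ 0) such that σ(t̃) = ζ t̃; indeed t̃ = (1/m) Σ_{i=0}^{m-1} ζ^{-i} σ^i(t) works. -/

import Mathlib

/-!
An algebra endomorphism `σ` of `R⟦X⟧` with `σ X ∈ (X)` fixes constant terms and multiplies
linear coefficients by that of `σ X`, as one sees from `f = C c + X g`. Hence every `σ^i X` is a
formal parameter with linear coefficient `ζ^i`, so the average `t̃` has linear coefficient `1`.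
Finally `σ` shifts the summands `ζ^{-i} σ^i X` cyclically up to the factor `ζ`, because both
`σ` and `ζ` have order dividing `m`.
-/

open Finset

namespace Module.End

variable {K V : Type*} [Field K] [AddCommGroup V] [Module K V]

theorem apply_sum_range_inv_pow_smul_pow_apply (f : Module.End K V) {m : ℕ} (hf : f ^ m = 1)
    {ζ : K} (hζ : ζ ^ m = 1) (v : V) :
    f (∑ i ∈ range m, (ζ ^ i)⁻¹ • (f ^ i) v) = ζ • ∑ i ∈ range m, (ζ ^ i)⁻¹ • (f ^ i) v := by
  obtain rfl | hm := m.eq_zero_or_pos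
  · simp
  have hζ0 : ζ ≠ 0 := by
    rintro rfl
    simp [hm.ne'] at hζ
  set F : ℕ → V := fun i ↦ (ζ ^ i)⁻¹ • (f ^ i) v
  have hF_step (i : ℕ) : f (F i) = ζ • F (i + 1) := by
    simp only [F, map_smul, smul_smul, pow_succ', Module.End.mul_apply]
    congr 1
    field_simp
  have hF_period : F m = F 0 := by simp [F, hf, hζ]
  have hshift : ∑ i ∈ range m, F (i + 1) = ∑ i ∈ range m, F i := by
    have := sum_range_succ' F m
    rw [sum_range_succ, hF_period] at this
    exact add_right_cancel this.symm
  rw [map_sum, ← hshift, smul_sum]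
  exact sum_congr rfl fun i _ ↦ hF_step i

end Module.End

namespace PowerSeries

variable {R : Type*} [CommRing R]

section AlgHom

variable (σ : R⟦X⟧ →ₐ[R] R⟦X⟧)

theorem algHom_apply_C (c : R) : σ (C c) = C c := σ.commutes c

theorem constantCoeff_algHom_apply (hX : constantCoeff (σ X) = 0) (f : R⟦X⟧) :
    constantCoeff (σ f) = constantCoeff f := by
  conv_lhs => rw [eq_X_mul_shift_add_const f]
  simp [algHom_apply_C, hX]

theorem coeff_one_algHom_apply (hX : constantCoeff (σ X) = 0) (f : R⟦X⟧) :
    coeff 1 (σ f) = coeff 1 (σ X) * coeff 1 f := by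
  conv_lhs => rw [eq_X_mul_shift_add_const f]
  simp [algHom_apply_C, coeff_one_mul, constantCoeff_algHom_apply σ hX]

end AlgHom

variable (σ : R⟦X⟧ ≃ₐ[R] R⟦X⟧)

theorem constantCoeff_pow_apply_X (hX : constantCoeff (σ X) = 0) (i : ℕ) :
    constantCoeff ((σ ^ i) X) = 0 := by
  induction i with
  | zero => simp
  | succ i ih =>
    rw [pow_succ', AlgEquiv.mul_apply]
    exact (constantCoeff_algHom_apply σ.toAlgHom hX _).trans ih

theorem coeff_one_pow_apply_X (hX : constantCoeff (σ X) = 0) (i : ℕ) :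
    coeff 1 ((σ ^ i) X) = coeff 1 (σ X) ^ i := by
  induction i with
  | zero => simp
  | succ i ih =>
    rw [pow_succ', AlgEquiv.mul_apply]
    exact (coeff_one_algHom_apply σ.toAlgHom hX _).trans (by rw [ih, pow_succ']; rfl)

end PowerSeries

open PowerSeries

/-- If `σ` is a `ℂ`-algebra automorphism of `ℂ[[t]]` of finite order `m` with
`σ(t) = ζt + (higher order terms)`, `ζ` a primitive `m`-th root of unity, then the element
`t̃ = (1/m) Σ_{i<m} ζ^{-i} σ^i(t)` is a formal parameter (zero constant term, nonzero
linear coefficient) satisfying `σ(t̃) = ζ t̃`. -/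
theorem stmt_9 (m : ℕ) (hm : 0 < m) (σ : PowerSeries ℂ ≃ₐ[ℂ] PowerSeries ℂ)
    (hσm : σ ^ m = 1) (ζ : ℂ) (hζ : IsPrimitiveRoot ζ m)
    (h0 : PowerSeries.coeff 0 (σ PowerSeries.X) = 0)
    (h1 : PowerSeries.coeff 1 (σ PowerSeries.X) = ζ) :
    ∃ t' : PowerSeries ℂ,
      t' = (m : ℂ)⁻¹ • ∑ i ∈ Finset.range m,
        (ζ ^ i)⁻¹ • (((σ ^ i : PowerSeries ℂ ≃ₐ[ℂ] PowerSeries ℂ)) PowerSeries.X) ∧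
      PowerSeries.coeff 0 t' = 0 ∧ PowerSeries.coeff 1 t' ≠ 0 ∧
      σ t' = ζ • t' := by
  rw [coeff_zero_eq_constantCoeff_apply] at h0
  have hζ0 : ζ ≠ 0 := hζ.ne_zero hm.ne'
  refine ⟨_, rfl, ?_, ?_, ?_⟩
  · simp only [coeff_zero_eq_constantCoeff_apply, map_smul, map_sum,
      constantCoeff_pow_apply_X σ h0, smul_zero, sum_const_zero]
  · simp only [map_smul, map_sum, coeff_one_pow_apply_X σ h0, h1, smul_eq_mul,
      inv_mul_cancel₀ (pow_ne_zero _ hζ0), sum_const, card_range, nsmul_eq_mul, mul_one]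
    simp [hm.ne']
  · have hσm' : σ.toLinearMap ^ m = 1 := by rw [← AlgEquiv.pow_toLinearMap, hσm]; rfl
    have := Module.End.apply_sum_range_inv_pow_smul_pow_apply σ.toLinearMap hσm' hζ.pow_eq_one X
    simp only [← AlgEquiv.pow_toLinearMap, AlgEquiv.toLinearMap_apply] at this
    rw [map_smul, this, smul_comm]
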